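/- arXiv:2007.12527 — 8 statements merged into one kernel-verified Lean document; each statement's English description precedes it below -/
import Mathlib

section
/- If a connected graph G factors as a Cartesian product G ≅ H □ K₂ with respect to every Θ-class (equivalence class of the Djoković relation) of a partial cube G, i.e., for each Θ-class E_i the halfspaces G_i^+ and G_i^- are isomorphic and every vertex of G_i^+ has a unique neighbor in G_i^-, then G is isomorphic to a hypercube. -/
open Finset
open scoped Classical

variable {U : Type*}

/-- Hamming distance between two vertices of the hypercube `U → Bool`. -/
def hDist [Fintype U] [DecidableEq U] (x y : U → Bool) : ℕ :=
  (Finset.univ.filter fun i => x i ≠ y i).card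

/-- The hypercube graph on `U → Bool`: two vertices are adjacent iff they differ
in exactly one coordinate. -/
def cubeGraph (U : Type*) [Fintype U] [DecidableEq U] : SimpleGraph (U → Bool) where
  Adj x y := hDist x y = 1
  symm := by
    constructor
    intro x y h
    have hs : (Finset.univ.filter fun i => y i ≠ x i) =
        (Finset.univ.filter fun i => x i ≠ y i) := by
      apply Finset.filter_congr
      intro i _
      exact ne_comm
    simpa [hDist, hs] using h
  loopless := by
    constructor
    intro x h
    simp [hDist] at h

/-- Distance between `x` and `y` inside the subgraph of the hypercube induced by `A`
(`0` if one of them is not in `A`). -/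
noncomputable def dIn [Fintype U] [DecidableEq U] (A : Set (U → Bool)) (x y : U → Bool) : ℕ :=
  if h : x ∈ A ∧ y ∈ A then ((cubeGraph U).induce A).dist ⟨x, h.1⟩ ⟨y, h.2⟩ else 0

/-- A set of vertices of the hypercube is a partial cube if its induced graph is connected
and the induced graph distance coincides with the Hamming distance
(i.e. it is an isometric subgraph of the hypercube). -/
def IsPartialCube [Fintype U] [DecidableEq U] (A : Set (U → Bool)) : Prop :=
  ((cubeGraph U).induce A).Connected ∧ ∀ x ∈ A, ∀ y ∈ A, dIn A x y = hDist x y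

/-- `A` shatters the coordinate set `X`. -/
def Shatters [Fintype U] [DecidableEq U] (A : Set (U → Bool)) (X : Finset U) : Prop :=
  ∀ g : U → Bool, ∃ a ∈ A, ∀ i ∈ X, a i = g i

/-- `A` strongly shatters `X`: it contains a full subcube over the coordinates `X`. -/
def StronglyShatters [Fintype U] [DecidableEq U] (A : Set (U → Bool)) (X : Finset U) : Prop :=
  ∃ a : U → Bool, ∀ g : U → Bool, (fun i => if i ∈ X then g i else a i) ∈ A

/-- An ample set family: every shattered set is strongly shattered. -/
def IsAmple [Fintype U] [DecidableEq U] (A : Set (U → Bool)) : Prop :=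
  ∀ X : Finset U, Shatters A X → StronglyShatters A X

/-
The hypothesis makes `S` closed under flipping any coordinate on which it varies.
Starting from any `b ∈ S`, flipping the varying coordinates one at a time reaches every point
that agrees with `b` elsewhere; conversely no point of `S` can differ from `b` on a constant
coordinate. So `S` is the subcube through `b` spanned by its varying coordinates.
-/

noncomputable def varyingCoords [Fintype U] (S : Set (U → Bool)) : Finset U :=
  univ.filter fun i => ∃ s ∈ S, ∃ t ∈ S, s i ≠ t i

theorem mem_varyingCoords [Fintype U] {S : Set (U → Bool)} {i : U} :
    i ∈ varyingCoords S ↔ ∃ s ∈ S, ∃ t ∈ S, s i ≠ t i := by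
  simp [varyingCoords]

theorem mem_of_forall_flip_mem [DecidableEq U] {S : Set (U → Bool)} {b : U → Bool} (hb : b ∈ S)
    {X : Finset U} (hflip : ∀ i ∈ X, ∀ s ∈ S, Function.update s i (!(s i)) ∈ S) {f : U → Bool}
    (hf : ∀ i ∉ X, f i = b i) : f ∈ S := by
  induction X using Finset.induction_on generalizing f with
  | empty => exact (funext fun i => hf i (Finset.notMem_empty i)) ▸ hb
  | insert i X _ ih =>
    have hflipX : ∀ j ∈ X, ∀ s ∈ S, Function.update s j (!(s j)) ∈ S :=
      fun j hj => hflip j (mem_insert_of_mem hj)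
    have hmem_of_agree : ∀ g : U → Bool, g i = b i → (∀ j ∉ insert i X, g j = f j) → g ∈ S := by
      intro g hgi hg
      refine ih hflipX fun j hj => ?_
      by_cases hji : j = i
      · exact hji ▸ hgi
      · have hj' : j ∉ insert i X := by simp [hji, hj]
        exact (hg j hj').trans (hf j hj')
    by_cases hfi : f i = b i
    · exact hmem_of_agree f hfi fun _ _ => rfl
    · set g := Function.update f i (b i)
      have hg : g ∈ S := hmem_of_agree g (Function.update_self ..) fun j hj =>
        Function.update_of_ne (by rintro rfl; exact hj (mem_insert_self j X)) ..
      convert hflip i (mem_insert_self i X) g hg using 1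
      funext j
      by_cases hji : j = i
      · subst hji
        simp only [g, Function.update_self]
        revert hfi; cases f j <;> cases b j <;> simp
      · simp [g, Function.update_of_ne hji]

theorem eq_subcube_of_forall_flip_mem [Fintype U] [DecidableEq U] {S : Set (U → Bool)}
    {b : U → Bool} (hb : b ∈ S)
    (hflip : ∀ i ∈ varyingCoords S, ∀ s ∈ S, Function.update s i (!(s i)) ∈ S) :
    S = {f | ∀ i ∉ varyingCoords S, f i = b i} := by
  ext f
  constructor
  · intro hfS i hi
    by_contra hne
    exact hi (mem_varyingCoords.2 ⟨f, hfS, b, hb, hne⟩)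
  · exact mem_of_forall_flip_mem hb hflip

theorem stmt0_general [Fintype U] [DecidableEq U] (S : Set (U → Bool))
    (hne : S.Nonempty)
    (hfac : ∀ i : U, (∃ s ∈ S, ∃ t ∈ S, s i ≠ t i) →
      ∀ s ∈ S, Function.update s i (!(s i)) ∈ S) :
    ∃ (X : Finset U) (b : U → Bool), S = {f | ∀ i ∉ X, f i = b i} := by
  obtain ⟨b, hb⟩ := hne
  exact ⟨varyingCoords S, b,
    eq_subcube_of_forall_flip_mem hb fun i hi => hfac i (mem_varyingCoords.1 hi)⟩

/-- If a connected partial cube `S` factors as `G_i^+ □ K₂` with respect to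
every Θ-class (i.e. for every coordinate `i` on which `S` is non-constant, every vertex of `S`
has its `i`-flip also in `S`, which says that each vertex of one halfspace has a unique
neighbour in the other), then `S` is a hypercube (a full subcube of the ambient cube). -/
theorem stmt0 [Fintype U] [DecidableEq U] (S : Set (U → Bool))
    (hne : S.Nonempty) (hpc : IsPartialCube S)
    (hfac : ∀ i : U, (∃ s ∈ S, ∃ t ∈ S, s i ≠ t i) →
      ∀ s ∈ S, Function.update s i (!(s i)) ∈ S) :
    ∃ (X : Finset U) (b : U → Bool), S = {f | ∀ i ∉ X, f i = b i} :=
  stmt0_general S hne hfac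
end

section
/- A path P between vertices u and v of a partial cube G is a shortest path if and only if all edges of P belong to pairwise distinct Θ-classes of G. -/
open Finset
open scoped Classical

variable {U : Type*}

/-- The set of coordinates in which the two endpoints of an edge of the hypercube differ;
for edges of a partial cube this determines the Θ-class of the edge. -/
def diffCoords [DecidableEq U] : Sym2 (U → Bool) → Set U :=
  Sym2.lift ⟨fun x y => {i | x i ≠ y i}, fun x y => by ext i; exact ne_comm⟩

/-!
In a partial cube the graph distance is the Hamming distance, and the Θ-class of an edge is
recorded by the single coordinate it flips. The endpoints of a walk differ only in coordinates
the walk flips, so their Hamming distance is at most the number of distinct flipped coordinates,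
which is at most the length; equality therefore forces the flips to be distinct. Conversely, if
no coordinate is flipped twice, every flipped coordinate separates the endpoints.
-/

section Hypercube

variable [Fintype U] [DecidableEq U]

def diffFinset (x y : U → Bool) : Finset U := Finset.univ.filter fun i => x i ≠ y i

omit [DecidableEq U] in
@[simp]
lemma mem_diffFinset {x y : U → Bool} {i : U} : i ∈ diffFinset x y ↔ x i ≠ y i := by
  simp [diffFinset]

lemma coe_diffFinset (x y : U → Bool) : (diffFinset x y : Set U) = diffCoords s(x, y) := by
  ext i
  simp [diffCoords]

lemma hDist_eq_card_diffFinset (x y : U → Bool) : hDist x y = (diffFinset x y).card := rfl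

lemma diffFinset_subset_union (x y z : U → Bool) :
    diffFinset x z ⊆ diffFinset x y ∪ diffFinset y z := by
  intro i
  simp only [mem_diffFinset, Finset.mem_union]
  intro hxz
  by_contra! h
  exact hxz (h.1.trans h.2)

lemma diffFinset_eq_insert {x y z : U → Bool} {i : U} (hxy : diffFinset x y = {i})
    (hi : i ∉ diffFinset y z) : diffFinset x z = insert i (diffFinset y z) := by
  have hxy' : ∀ j, x j ≠ y j ↔ j = i := fun j => by
    rw [← mem_diffFinset, hxy, Finset.mem_singleton]
  rw [mem_diffFinset, not_not] at hi
  ext j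
  simp only [mem_diffFinset, Finset.mem_insert]
  by_cases hj : j = i
  · subst hj
    simpa [← hi] using (hxy' j).mpr rfl
  · have : x j = y j := not_not.mp (mt (hxy' j).mp hj)
    simp [this, hj]

noncomputable def flipCoord {x y : U → Bool} (h : (cubeGraph U).Adj x y) : U :=
  (Finset.card_eq_one.mp h).choose

lemma diffFinset_eq_singleton_flipCoord {x y : U → Bool} (h : (cubeGraph U).Adj x y) :
    diffFinset x y = {flipCoord h} :=
  (Finset.card_eq_one.mp h).choose_spec

namespace SimpleGraph.Walk

noncomputable def flips : {x y : U → Bool} → (cubeGraph U).Walk x y → List U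
  | _, _, .nil => []
  | _, _, .cons h q => flipCoord h :: q.flips

lemma length_flips {x y : U → Bool} (q : (cubeGraph U).Walk x y) :
    q.flips.length = q.length := by
  induction q with
  | nil => rfl
  | cons _ _ ih => simp [flips, ih]

lemma edges_map_diffCoords {x y : U → Bool} (q : (cubeGraph U).Walk x y) :
    q.edges.map diffCoords = q.flips.map fun i => {i} := by
  induction q with
  | nil => rfl
  | cons h q ih =>
    rw [edges_cons, List.map_cons, ih, flips, List.map_cons, ← coe_diffFinset,
      diffFinset_eq_singleton_flipCoord h, Finset.coe_singleton]

lemma pairwise_diffCoords_iff_nodup {x y : U → Bool} (q : (cubeGraph U).Walk x y) :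
    (q.edges.map diffCoords).Pairwise (· ≠ ·) ↔ q.flips.Nodup := by
  simp [edges_map_diffCoords, List.pairwise_map, List.Nodup]

lemma diffFinset_subset_toFinset_flips {x y : U → Bool} (q : (cubeGraph U).Walk x y) :
    diffFinset x y ⊆ q.flips.toFinset := by
  induction q with
  | nil => simp [diffFinset]
  | @cons x y z h q ih =>
    refine (diffFinset_subset_union x y z).trans ?_
    rw [diffFinset_eq_singleton_flipCoord h, flips, List.toFinset_cons, Finset.insert_eq]
    exact Finset.union_subset_union_right ih

lemma hDist_le_card_toFinset_flips {x y : U → Bool} (q : (cubeGraph U).Walk x y) :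
    hDist x y ≤ q.flips.toFinset.card :=
  Finset.card_le_card (diffFinset_subset_toFinset_flips q)

lemma hDist_eq_length_of_nodup {x y : U → Bool} (q : (cubeGraph U).Walk x y)
    (hq : q.flips.Nodup) : hDist x y = q.length := by
  induction q with
  | nil => simp [hDist, length_nil]
  | cons h q ih =>
    rw [flips, List.nodup_cons] at hq
    have hnot : flipCoord h ∉ diffFinset _ _ := fun hmem =>
      hq.1 (List.mem_toFinset.mp (diffFinset_subset_toFinset_flips q hmem))
    rw [hDist_eq_card_diffFinset, diffFinset_eq_insert (diffFinset_eq_singleton_flipCoord h) hnot,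
      Finset.card_insert_of_notMem hnot, ← hDist_eq_card_diffFinset, ih hq.2,
      length_cons]

theorem hDist_eq_length_iff_nodup {x y : U → Bool} (q : (cubeGraph U).Walk x y) :
    hDist x y = q.length ↔ q.flips.Nodup := by
  refine ⟨fun hq => ?_, hDist_eq_length_of_nodup q⟩
  have hcard : q.flips.toFinset.card = q.flips.length := by
    refine le_antisymm q.flips.toFinset_card_le ?_
    rw [length_flips, ← hq]
    exact hDist_le_card_toFinset_flips q
  exact Multiset.toFinset_card_eq_card_iff_nodup.mp hcard

end SimpleGraph.Walk

lemma IsPartialCube.dist_eq_hDist {S : Set (U → Bool)} (hS : IsPartialCube S) (u v : ↥S) :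
    ((cubeGraph U).induce S).dist u v = hDist u.1 v.1 := by
  simpa [dIn, u.2, v.2] using hS.2 u.1 u.2 v.1 v.2

end Hypercube

theorem stmt1_general [Fintype U] [DecidableEq U] (S : Set (U → Bool)) (hpc : IsPartialCube S)
    (u v : ↥S) (p : ((cubeGraph U).induce S).Walk u v) :
    p.length = ((cubeGraph U).induce S).dist u v ↔
      (p.edges.map fun e => diffCoords (e.map (Subtype.val : ↥S → U → Bool))).Pairwise (· ≠ ·) := by
  let q := p.map (SimpleGraph.Embedding.induce S).toHom
  have hlen : q.length = p.length := SimpleGraph.Walk.length_map _ _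
  have hedges : q.edges.map diffCoords =
      p.edges.map fun e => diffCoords (e.map (Subtype.val : ↥S → U → Bool)) := by
    rw [SimpleGraph.Walk.edges_map, List.map_map]
    rfl
  rw [hpc.dist_eq_hDist, ← hedges, ← hlen, SimpleGraph.Walk.pairwise_diffCoords_iff_nodup,
    ← SimpleGraph.Walk.hDist_eq_length_iff_nodup, eq_comm]
  rfl

/-- A `(u,v)`-path `P` of a partial cube is a shortest path if and only if
all its edges belong to pairwise distinct Θ-classes. -/
theorem stmt1 [Fintype U] [DecidableEq U] (S : Set (U → Bool)) (hpc : IsPartialCube S)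
    (u v : ↥S) (p : ((cubeGraph U).induce S).Walk u v) (hp : p.IsPath) :
    p.length = ((cubeGraph U).induce S).dist u v ↔
      (p.edges.map fun e => diffCoords (e.map (Subtype.val : ↥S → U → Bool))).Pairwise (· ≠ ·) :=
  stmt1_general S hpc u v p
end

section
/- Let G be a partial cube, H a gated subgraph of G, v a vertex of G, and v' the gate of v in H. Then no shortest (v,v')-path of G contains an edge whose Θ-class contains an edge of H. -/
open Finset
open scoped Classical

variable {U : Type*}

/-!
Since `S` is isometric in the hypercube, the gate equation `d(v,y) = d(v,v') + d(v',y)` holds for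
the Hamming distance, so `v'` agrees with `v` on every coordinate on which `v` agrees with some
`y ∈ H`. If `H` has an edge in coordinate `i`, it contains a vertex agreeing with `v` at `i`;
hence `v i = v' i`. A walk between two vertices that agree at `i` but which flips `i` somewhere
is longer than their Hamming distance, so it is not a shortest path.
-/

section Hamming

variable {ι : Type*} {β : ι → Type*} [Fintype ι] [∀ i, DecidableEq (β i)]

lemma apply_eq_of_hammingDist_eq_one {a b : ∀ i, β i} (hab : hammingDist a b = 1) {i j : ι}
    (hi : a i ≠ b i) (hj : j ≠ i) : a j = b j := by
  by_contra hne
  exact hj (card_le_one.mp hab.le j (by simpa using hne) i (by simpa using hi))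

lemma hammingDist_eq_add_one_of_flip [DecidableEq ι] {a b y : ∀ i, β i}
    (hab : hammingDist a b = 1) {i : ι} (hi : a i ≠ b i) (hay : a i = y i) :
    hammingDist b y = hammingDist a y + 1 := by
  have hset : univ.filter (fun j => b j ≠ y j) = insert i (univ.filter fun j => a j ≠ y j) := by
    ext j
    by_cases hji : j = i
    · subst hji
      simpa [← hay] using Ne.symm hi
    · simp [hji, apply_eq_of_hammingDist_eq_one hab hi hji]
  rw [hammingDist, hammingDist, hset, card_insert_of_notMem (by simp [hay])]

lemma apply_eq_of_hammingDist_eq_add [DecidableEq ι] {x y z : ∀ i, β i}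
    (h : hammingDist x z = hammingDist x y + hammingDist y z) {i : ι} (hxz : x i = z i) :
    x i = y i := by
  by_contra hxy
  set A := univ.filter fun j => x j ≠ y j
  set B := univ.filter fun j => y j ≠ z j
  have hsub : #(univ.filter fun j => x j ≠ z j) ≤ #(A ∪ B) := by
    refine card_le_card fun j hj => ?_
    simp only [A, B, mem_union, mem_filter, mem_univ, true_and] at hj ⊢
    by_contra! hj'
    exact hj (hj'.1.trans hj'.2)
  have hinter : 0 < #(A ∩ B) :=
    card_pos.mpr ⟨i, by simp [A, B, hxy, ← hxz, Ne.symm hxy]⟩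
  have := card_union_add_card_inter A B
  have h' : #(univ.filter fun j => x j ≠ z j) = #A + #B := h
  omega

end Hamming

section Cube

variable [Fintype U] [DecidableEq U]

lemma hDist_eq_hammingDist (x y : U → Bool) : hDist x y = hammingDist x y := rfl

lemma hDist_le_length {x y : U → Bool} (p : (cubeGraph U).Walk x y) : hDist x y ≤ p.length := by
  induction p with
  | nil => simp [hDist_eq_hammingDist]
  | @cons a b c hab q ih =>
    have hab : hammingDist a b = 1 := hab
    have := hammingDist_triangle a b c
    simp only [hDist_eq_hammingDist, SimpleGraph.Walk.length_cons] at ih ⊢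
    omega

lemma hDist_add_one_le_length {x y : U → Bool} (p : (cubeGraph U).Walk x y) {i : U}
    (hxy : x i = y i) {e : Sym2 (U → Bool)} (he : e ∈ p.edges) (hi : i ∈ diffCoords e) :
    hDist x y + 1 ≤ p.length := by
  induction p with
  | nil => simp at he
  | @cons a b c hab q ih =>
    have hab : hammingDist a b = 1 := hab
    have hq := hDist_le_length q
    simp only [hDist_eq_hammingDist, SimpleGraph.Walk.length_cons] at ih hq ⊢
    by_cases hbc : b i = c i
    · rcases List.mem_cons.mp (SimpleGraph.Walk.edges_cons .. ▸ he) with rfl | he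
      · simp [diffCoords, hxy, hbc] at hi
      · have := hammingDist_triangle a b c
        have := ih hbc he
        omega
    · have hai : a i ≠ b i := fun h => hbc (h ▸ hxy)
      have := hammingDist_eq_add_one_of_flip hab hai hxy
      omega

end Cube

theorem stmt2_general [Fintype U] [DecidableEq U] (S H : Set (U → Bool)) (hpc : IsPartialCube S)
    (hHS : H ⊆ S)
    (v : U → Bool) (hv : v ∈ S) (v' : U → Bool) (hv'H : v' ∈ H)
    (hgate : ∀ y ∈ H, dIn S v y = dIn S v v' + dIn S v' y)
    (p : ((cubeGraph U).induce S).Walk ⟨v, hv⟩ ⟨v', hHS hv'H⟩)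
    (hshort : p.length = dIn S v v') :
    ∀ e ∈ p.edges, ∀ i ∈ diffCoords (e.map (Subtype.val : ↥S → U → Bool)),
      ¬ ∃ h₁ ∈ H, ∃ h₂ ∈ H, hDist h₁ h₂ = 1 ∧ h₁ i ≠ h₂ i := by
  rintro e he i hi ⟨h₁, hh₁, h₂, hh₂, -, hne⟩
  have hdist : ∀ x ∈ S, ∀ y ∈ S, dIn S x y = hammingDist x y := hpc.2
  obtain ⟨y, hyH, hvy⟩ : ∃ y ∈ H, v i = y i := by
    rcases Bool.eq_or_eq_not (v i) (h₁ i) with h | h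
    · exact ⟨h₁, hh₁, h⟩
    · exact ⟨h₂, hh₂, h.trans (Bool.eq_not_iff.mpr hne.symm).symm⟩
  have hvv' : v i = v' i := by
    have := hgate y hyH
    rw [hdist v hv y (hHS hyH), hdist v hv v' (hHS hv'H), hdist v' (hHS hv'H) y (hHS hyH)] at this
    exact apply_eq_of_hammingDist_eq_add this hvy
  have hlong := hDist_add_one_le_length (p.map (SimpleGraph.Embedding.induce S).toHom) hvv'
    (SimpleGraph.Walk.edges_map _ p ▸ List.mem_map_of_mem he) hi
  rw [SimpleGraph.Walk.length_map, hshort, hdist v hv v' (hHS hv'H)] at hlong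
  exact (Nat.lt_irrefl _ hlong).elim

/-- Let `S` be a partial cube, `H` a gated subgraph of `S`, `v` a vertex
and `v'` the gate of `v` in `H`.  Then no shortest `(v,v')`-path contains an edge whose
Θ-class (differing coordinate) contains an edge of `H`. -/
theorem stmt2 [Fintype U] [DecidableEq U] (S H : Set (U → Bool)) (hpc : IsPartialCube S)
    (hHS : H ⊆ S)
    (hgated : ∀ w ∈ S, ∃ g ∈ H, ∀ y ∈ H, dIn S w y = dIn S w g + dIn S g y)
    (v : U → Bool) (hv : v ∈ S) (v' : U → Bool) (hv'H : v' ∈ H)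
    (hgate : ∀ y ∈ H, dIn S v y = dIn S v v' + dIn S v' y)
    (p : ((cubeGraph U).induce S).Walk ⟨v, hv⟩ ⟨v', hHS hv'H⟩)
    (hshort : p.length = dIn S v v') :
    ∀ e ∈ p.edges, ∀ i ∈ diffCoords (e.map (Subtype.val : ↥S → U → Bool)),
      ¬ ∃ h₁ ∈ H, ∃ h₂ ∈ H, hDist h₁ h₂ = 1 ∧ h₁ i ≠ h₂ i :=
  stmt2_general S H hpc hHS v hv v' hv'H hgate p hshort
end

section
/- A graph G is a partial cube (i.e., admits an isometric embedding into a hypercube) if and only if G is bipartite and for every edge uv the sets W(u,v) = {x : d(x,u) < d(x,v)} and W(v,u) are convex. -/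
/-!
An isometric embedding `φ` sends each edge `uv` to a cube edge flipping one coordinate `i`,
and `W(u,v)` is the pullback of the half-cube `{x | x i = φ u i}`; half-cubes are convex
and the cube is bipartite, which gives the forward direction.

Conversely, in a bipartite graph `W(u,v)` and `W(v,u)` partition the vertices, and convexity
forces any `W(u,v)` separating the ends of an edge `zy` to be `W(z,y)` or `W(y,z)`. Fixing a
base vertex `b` and taking as coordinates the sets `W(u,v)` that contain `b`, an edge thus
changes exactly one coordinate, and along a geodesic `x … z y` the coordinate changed by `zy`
is not changed between `x` and `z` (both lie in `W(z,y)`), so Hamming distance grows by one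
per step.
-/

open Finset
open scoped Classical

variable {U : Type*}

variable {V : Type*}

/-- `W(u,v)`: the vertices strictly closer to `u` than to `v`. -/
def Wside (G : SimpleGraph V) (u v : V) : Set V := {x | G.dist x u < G.dist x v}

/-- A set of vertices is convex if it contains every vertex lying on a shortest path
between two of its members. -/
def GraphConvex (G : SimpleGraph V) (S : Set V) : Prop :=
  ∀ x ∈ S, ∀ y ∈ S, ∀ z : V, G.dist x z + G.dist z y = G.dist x y → z ∈ S

section Hamming

variable [Fintype U] [DecidableEq U]

lemma hDist_comm (x y : U → Bool) : hDist x y = hDist y x := by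
  simp only [hDist, ne_comm]

lemma hDist_comp_equiv {U' : Type*} [Fintype U'] [DecidableEq U'] (e : U' ≃ U)
    (x y : U → Bool) : hDist (x ∘ e) (y ∘ e) = hDist x y :=
  Finset.card_equiv e fun i => by simp

lemma exists_fin_hDist_eq (φ : V → U → Bool) :
    ∃ (m : ℕ) (ψ : V → Fin m → Bool), ∀ u v, hDist (ψ u) (ψ v) = hDist (φ u) (φ v) :=
  ⟨_, fun x => φ x ∘ (Fintype.equivFin U).symm, fun _ _ => hDist_comp_equiv _ _ _⟩

lemma hDist_eq_one_iff {x y : U → Bool} :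
    hDist x y = 1 ↔ ∃ i, x i ≠ y i ∧ ∀ j, x j ≠ y j → j = i := by
  simp only [hDist, Finset.card_eq_one, Finset.eq_singleton_iff_unique_mem, mem_filter,
    mem_univ, true_and]

lemma hDist_eq_hDist_add_one {x y z : U → Bool} (hzy : hDist z y = 1)
    (hx : ∀ i, z i ≠ y i → x i = z i) : hDist x y = hDist x z + 1 := by
  obtain ⟨i, hi, huniq⟩ := hDist_eq_one_iff.mp hzy
  have hfilter :
      univ.filter (fun j => x j ≠ y j) = insert i (univ.filter fun j => x j ≠ z j) := by
    ext j
    simp only [mem_filter, mem_univ, true_and, mem_insert]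
    by_cases hj : j = i
    · subst hj
      simp [hx j hi, hi]
    · have : z j = y j := by_contra fun h => hj (huniq j h)
      simp [hj, this]
  rw [hDist, hfilter, card_insert_of_notMem (by simp [hx i hi])]
  rfl

lemma eq_of_hDist_add_hDist_eq {x y z : U → Bool} (h : hDist x z + hDist z y = hDist x y)
    {i : U} (hi : x i = y i) : z i = x i := by
  by_contra hz
  simp only [hDist, card_filter, ← sum_add_distrib] at h
  refine h.not_gt (sum_lt_sum (fun j _ => ?_) ⟨i, mem_univ i, ?_⟩)
  · by_cases hxz : x j = z j <;> by_cases hzy : z j = y j <;> by_cases hxy : x j = y j <;>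
      simp_all
  · have hzy : z i ≠ y i := hi ▸ hz
    simp [hi, hzy]

lemma cubeGraph_colorable_two : (cubeGraph U).Colorable 2 := by
  let parity (x : U → Bool) : Bool := decide (Even (hDist (fun _ => false) x))
  refine (SimpleGraph.Coloring.mk parity fun {x y} (hxy : hDist x y = 1) => ?_ :
    (cubeGraph U).Coloring Bool).colorable
  obtain ⟨i, hi, huniq⟩ := hDist_eq_one_iff.mp hxy
  wlog hxi : x i = false generalizing x y
  · exact (this (hDist_comm x y ▸ hxy) hi.symm (fun j hj => huniq j (Ne.symm hj))
      (by simpa [hxi] using hi.symm)).symm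
  have h : hDist (fun _ => false) y = hDist (fun _ => false) x + 1 :=
    hDist_eq_hDist_add_one hxy fun j hj => by rw [huniq j hj, hxi]
  simp only [parity, h, Nat.even_add_one, ne_eq, decide_eq_decide]
  tauto

end Hamming

section Graph

open SimpleGraph

variable {G : SimpleGraph V}

section IsometricEmbedding

variable [Fintype U] [DecidableEq U] {φ : V → U → Bool}

lemma colorable_two_of_hDist_eq_dist (hφ : ∀ u v, hDist (φ u) (φ v) = G.dist u v) :
    G.Colorable 2 :=
  Colorable.of_hom ⟨φ, fun huv => (hφ _ _).trans (dist_eq_one_iff_adj.mpr huv)⟩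
    cubeGraph_colorable_two

lemma mem_wside_iff_of_hDist_eq_dist (hφ : ∀ u v, hDist (φ u) (φ v) = G.dist u v)
    {u v : V} {i : U} (hi : φ u i ≠ φ v i) (huniq : ∀ j, φ u j ≠ φ v j → j = i) (x : V) :
    x ∈ Wside G u v ↔ φ x i = φ u i := by
  have huv : hDist (φ u) (φ v) = 1 := hDist_eq_one_iff.mpr ⟨i, hi, huniq⟩
  simp only [Wside, Set.mem_ofPred_eq, ← hφ]
  by_cases hx : φ x i = φ u i
  · have := hDist_eq_hDist_add_one huv fun j hj => huniq j hj ▸ hx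
    simp [hx, this]
  · have hxv : φ x i = φ v i := by
      revert hx hi; cases φ x i <;> cases φ u i <;> cases φ v i <;> simp
    have := hDist_eq_hDist_add_one (hDist_comm (φ u) (φ v) ▸ huv)
      fun j hj => huniq j (Ne.symm hj) ▸ hxv
    simp [hx, this]

lemma graphConvex_wside_of_hDist_eq_dist (hφ : ∀ u v, hDist (φ u) (φ v) = G.dist u v)
    {u v : V} (huv : G.Adj u v) : GraphConvex G (Wside G u v) := by
  have h1 : hDist (φ u) (φ v) = 1 := (hφ u v).trans (dist_eq_one_iff_adj.mpr huv)
  obtain ⟨i, hi, huniq⟩ := hDist_eq_one_iff.mp h1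
  intro x hx y hy z hz
  rw [mem_wside_iff_of_hDist_eq_dist hφ hi huniq] at hx hy ⊢
  rw [← hφ, ← hφ, ← hφ] at hz
  rw [eq_of_hDist_add_hDist_eq hz (hx.trans hy.symm), hx]

end IsometricEmbedding

lemma SimpleGraph.Colorable.dist_ne_of_adj (hG : G.Colorable 2) {x u v : V}
    (hxu : G.Reachable x u) (huv : G.Adj u v) : G.dist x u ≠ G.dist x v := by
  intro heq
  obtain ⟨p, hp⟩ := hxu.exists_walk_length_eq_dist
  obtain ⟨q, hq⟩ := (hxu.trans huv.reachable).exists_walk_length_eq_dist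
  have hloop := two_colorable_iff_forall_loop_even.mp hG x ((p.concat huv).append q.reverse)
  rw [Walk.length_append, Walk.length_concat, Walk.length_reverse, hp, hq, heq] at hloop
  exact Nat.not_even_iff_odd.mpr ⟨G.dist x v, by ring⟩ hloop

lemma mem_wside_self {u v : V} (huv : G.Adj u v) : u ∈ Wside G u v := by
  simp [Wside, dist_eq_one_iff_adj.mpr huv]

lemma disjoint_wside (u v : V) : Disjoint (Wside G u v) (Wside G v u) :=
  Set.disjoint_left.mpr fun _ (h : G.dist _ u < _) h' => lt_asymm h h'

lemma compl_wside (hc : G.Connected) (hG : G.Colorable 2) {u v : V} (huv : G.Adj u v) :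
    (Wside G u v)ᶜ = Wside G v u := by
  ext x
  exact not_lt.trans (hG.dist_ne_of_adj (hc x u) huv).symm.le_iff_lt

lemma dist_eq_dist_add_one_of_mem_wside {u v x : V} (huv : G.Adj u v) (hx : x ∈ Wside G u v) :
    G.dist x v = G.dist x u + 1 := by
  have := huv.reachable.dist_triangle_right x
  rw [dist_eq_one_iff_adj.mpr huv] at this
  exact le_antisymm this hx

lemma GraphConvex.subset_wside (hc : G.Connected) (hG : G.Colorable 2) {S : Set V}
    (hS : GraphConvex G S) {y z : V} (hzy : G.Adj z y) (hz : z ∈ S) (hy : y ∉ S) :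
    S ⊆ Wside G z y := by
  intro w hw
  by_contra hwzy
  rw [← Set.mem_compl_iff, compl_wside hc hG hzy] at hwzy
  have hgeo : G.dist w y + G.dist y z = G.dist w z := by
    rw [dist_eq_one_iff_adj.mpr hzy.symm, dist_eq_dist_add_one_of_mem_wside hzy.symm hwzy]
  exact hy (hS w hw z hz y hgeo)

lemma wside_eq_of_adj (hc : G.Connected) (hG : G.Colorable 2) {u v y z : V} (huv : G.Adj u v)
    (huv_conv : GraphConvex G (Wside G u v)) (hvu_conv : GraphConvex G (Wside G v u))
    (hzy : G.Adj z y) (hz : z ∈ Wside G u v) (hy : y ∉ Wside G u v) :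
    Wside G u v = Wside G z y := by
  refine (huv_conv.subset_wside hc hG hzy hz hy).antisymm ?_
  have hvu : Wside G v u ⊆ Wside G y z := by
    rw [← compl_wside hc hG huv] at hvu_conv ⊢
    exact hvu_conv.subset_wside hc hG hzy.symm hy (not_not.mpr hz)
  rwa [← compl_wside hc hG hzy.symm, ← compl_wside hc hG huv.symm, Set.compl_subset_compl]

lemma SimpleGraph.Reachable.exists_adj_dist_eq {x y : V} {n : ℕ} (hxy : G.Reachable x y)
    (h : G.dist x y = n + 1) : ∃ z, G.Adj z y ∧ G.dist x z = n := by
  obtain ⟨p, hp⟩ := hxy.exists_walk_length_eq_dist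
  have hnil : ¬p.Nil := by simp [← Walk.length_eq_zero_iff, hp, h]
  refine ⟨p.penultimate, p.adj_penultimate hnil, le_antisymm ?_ ?_⟩
  · simpa [Walk.length_dropLast, hp, h] using dist_le p.dropLast
  · have := (p.adj_penultimate hnil).reachable.dist_triangle_right x
    rw [dist_eq_one_iff_adj.mpr (p.adj_penultimate hnil)] at this
    omega

lemma wside_eq_or_eq_of_adj (hc : G.Connected) (hG : G.Colorable 2)
    (hconv : ∀ u v, G.Adj u v → GraphConvex G (Wside G u v)) {u v y z : V} (huv : G.Adj u v)
    (hzy : G.Adj z y) (hsep : ¬(z ∈ Wside G u v ↔ y ∈ Wside G u v)) :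
    Wside G u v = Wside G z y ∨ Wside G u v = Wside G y z := by
  by_cases hz : z ∈ Wside G u v
  · exact .inl <| wside_eq_of_adj hc hG huv (hconv u v huv) (hconv v u huv.symm) hzy hz
      fun hy => hsep ⟨fun _ => hy, fun _ => hz⟩
  · exact .inr <| wside_eq_of_adj hc hG huv (hconv u v huv) (hconv v u huv.symm) hzy.symm
      (by tauto) hz

end Graph

section Djokovic

open SimpleGraph

variable {G : SimpleGraph V}

/-- Keeping only the side that contains `b` makes each pair `W(u,v)`, `W(v,u)` one
coordinate rather than two, which would double all distances. -/
def djokovicCoords (G : SimpleGraph V) (b : V) : Set (Set V) :=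
  {S | b ∈ S ∧ ∃ u v, G.Adj u v ∧ S = Wside G u v}

noncomputable def djokovicEmbedding (G : SimpleGraph V) (b x : V) : djokovicCoords G b → Bool :=
  fun S => decide (x ∈ S.1)

lemma hDist_djokovicEmbedding_of_adj [Fintype V] (hc : G.Connected) (hG : G.Colorable 2)
    (hconv : ∀ u v, G.Adj u v → GraphConvex G (Wside G u v)) (b : V) {y z : V}
    (hzy : G.Adj z y) :
    hDist (djokovicEmbedding G b z) (djokovicEmbedding G b y) = 1 := by
  wlog hb : b ∈ Wside G z y generalizing y z
  · rw [hDist_comm]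
    exact this hzy.symm (by rwa [← compl_wside hc hG hzy])
  refine hDist_eq_one_iff.mpr ⟨⟨Wside G z y, hb, z, y, hzy, rfl⟩, ?_, ?_⟩
  · simp [djokovicEmbedding, mem_wside_self hzy,
      Set.disjoint_right.mp (disjoint_wside z y) (mem_wside_self hzy.symm)]
  · rintro ⟨S, hbS, u, v, huv, rfl⟩ hsep
    simp only [djokovicEmbedding, ne_eq, decide_eq_decide] at hsep
    rcases wside_eq_or_eq_of_adj hc hG hconv huv hzy hsep with h | h
    · exact Subtype.ext h
    · exact absurd (h ▸ hbS) (Set.disjoint_left.mp (disjoint_wside z y) hb)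

lemma hDist_djokovicEmbedding [Fintype V] (hc : G.Connected) (hG : G.Colorable 2)
    (hconv : ∀ u v, G.Adj u v → GraphConvex G (Wside G u v)) (b x y : V) :
    hDist (djokovicEmbedding G b x) (djokovicEmbedding G b y) = G.dist x y := by
  obtain ⟨n, hn⟩ : ∃ n, G.dist x y = n := ⟨_, rfl⟩
  induction n generalizing y with
  | zero => simp [(hc.dist_eq_zero_iff).mp hn, hDist]
  | succ n ih =>
    obtain ⟨z, hzy, hxz⟩ := (hc x y).exists_adj_dist_eq hn
    have hx : x ∈ Wside G z y := by simp [Wside, hxz, hn]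
    rw [hDist_eq_hDist_add_one (hDist_djokovicEmbedding_of_adj hc hG hconv b hzy) ?_, ih z hxz,
      hxz, hn]
    rintro ⟨S, hbS, u, v, huv, rfl⟩ hsep
    simp only [djokovicEmbedding, ne_eq, decide_eq_decide] at hsep ⊢
    rcases wside_eq_or_eq_of_adj hc hG hconv huv hzy hsep with h | h <;> rw [h]
    · exact iff_of_true hx (mem_wside_self hzy)
    · exact iff_of_false (Set.disjoint_left.mp (disjoint_wside z y) hx)
        (Set.disjoint_left.mp (disjoint_wside z y) (mem_wside_self hzy))

end Djokovic

/-- **Djoković.** A finite connected graph `G` is a partial cube (admits an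
isometric embedding into a hypercube) if and only if `G` is bipartite and for every edge
`uv` the sets `W(u,v)` and `W(v,u)` are convex. -/
theorem stmt3 [Fintype V] (G : SimpleGraph V) (hc : G.Connected) :
    (∃ (m : ℕ) (φ : V → (Fin m → Bool)), ∀ u v : V, hDist (φ u) (φ v) = G.dist u v) ↔
      (G.Colorable 2 ∧ ∀ u v : V, G.Adj u v →
        GraphConvex G (Wside G u v) ∧ GraphConvex G (Wside G v u)) := by
  constructor
  · rintro ⟨m, φ, hφ⟩
    exact ⟨colorable_two_of_hDist_eq_dist hφ, fun u v huv =>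
      ⟨graphConvex_wside_of_hDist_eq_dist hφ huv,
        graphConvex_wside_of_hDist_eq_dist hφ huv.symm⟩⟩
  · rintro ⟨hG, hconv⟩
    obtain ⟨b⟩ := hc.nonempty
    obtain ⟨m, ψ, hψ⟩ := exists_fin_hDist_eq (djokovicEmbedding G b)
    exact ⟨m, ψ, fun u v => (hψ u v).trans
      (hDist_djokovicEmbedding hc hG (fun u v huv => (hconv u v huv).1) b u v)⟩
end

section
/- A partial cube G isometrically embedded in Q_m has VC-dimension at most d if and only if G has no pc-minor isomorphic to the (d+1)-cube Q_{d+1}; in particular contracting a Θ-class never increases the VC-dimension. -/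
open Finset
open scoped Classical

variable {U : Type*}

/-- The pc-minor relation: `PCMinor S T` holds if `T` is obtained from `S` by a sequence of
restrictions to halfspaces and contractions of Θ-classes (a coordinate is contracted by
setting it to `false`). -/
inductive PCMinor {U : Type*} [DecidableEq U] : Set (U → Bool) → Set (U → Bool) → Prop
  | refl (S : Set (U → Bool)) : PCMinor S S
  | restrict (S : Set (U → Bool)) (i : U) (b : Bool) (T : Set (U → Bool)) :
      PCMinor (S ∩ {f | f i = b}) T → PCMinor S T
  | contract (S : Set (U → Bool)) (i : U) (T : Set (U → Bool)) :
      PCMinor ((fun f => Function.update f i false) '' S) T → PCMinor S T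

/-- `T` is a full subcube of dimension `k`. -/
def IsSubcube {U : Type*} [DecidableEq U] (T : Set (U → Bool)) (k : ℕ) : Prop :=
  ∃ (X : Finset U) (b : U → Bool), X.card = k ∧ T = {f | ∀ i ∉ X, f i = b i}

/-!
A restriction only shrinks the family and a contracted coordinate becomes constant, so every set
shattered by a pc-minor is already shattered by `S`; a `k`-subcube shatters its `k` free
coordinates. Conversely, contracting every coordinate outside a shattered set `X` leaves exactly
the subcube on `X`.
-/

theorem piecewise_insert_eq_piecewise_update [DecidableEq U] (s : Finset U) (a : U)
    (c f : U → Bool) :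
    (insert a s).piecewise c f = s.piecewise c (Function.update f a (c a)) := by
  ext i
  by_cases hi : i = a
  · subst hi
    by_cases hs : i ∈ s <;> simp [hs]
  · by_cases hs : i ∈ s <;> simp [hs, hi]

theorem pcMinor_image_piecewise_false [DecidableEq U] (Y : Finset U) (S : Set (U → Bool)) :
    PCMinor S ((fun f => Y.piecewise (fun _ => false) f) '' S) := by
  induction Y using Finset.induction_on generalizing S with
  | empty => simpa using PCMinor.refl S
  | insert a Y _ ih =>
    refine PCMinor.contract S a _ ?_
    simpa only [Set.image_image, piecewise_insert_eq_piecewise_update] using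
      ih ((fun f => Function.update f a false) '' S)

section Shatters

variable [Fintype U] [DecidableEq U]

theorem Shatters.mono_left {A B : Set (U → Bool)} {X : Finset U} (hAB : A ⊆ B)
    (h : Shatters A X) : Shatters B X := fun g => by
  obtain ⟨a, ha, hag⟩ := h g
  exact ⟨a, hAB ha, hag⟩

theorem Shatters.mono_right {A : Set (U → Bool)} {X Y : Finset U} (hYX : Y ⊆ X)
    (h : Shatters A X) : Shatters A Y := fun g => by
  obtain ⟨a, ha, hag⟩ := h g
  exact ⟨a, ha, fun i hi => hag i (hYX hi)⟩

theorem Shatters.of_image_update_false {S : Set (U → Bool)} {i : U} {X : Finset U}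
    (h : Shatters ((fun f => Function.update f i false) '' S) X) : Shatters S X := by
  by_cases hi : i ∈ X
  · obtain ⟨_, ⟨b, _, rfl⟩, hb⟩ := h fun _ => true
    simpa using hb i hi
  · intro g
    obtain ⟨_, ⟨b, hb, rfl⟩, hbg⟩ := h g
    refine ⟨b, hb, fun j hj => ?_⟩
    have hji : j ≠ i := fun hji => hi (hji ▸ hj)
    simpa [hji] using hbg j hj

theorem PCMinor.shatters {S T : Set (U → Bool)} (h : PCMinor S T) {X : Finset U}
    (hT : Shatters T X) : Shatters S X := by
  induction h with
  | refl => exact hT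
  | restrict _ _ _ _ _ ih => exact (ih hT).mono_left Set.inter_subset_left
  | contract _ _ _ _ ih => exact (ih hT).of_image_update_false

theorem IsSubcube.exists_shatters {T : Set (U → Bool)} {k : ℕ} (h : IsSubcube T k) :
    ∃ X : Finset U, X.card = k ∧ Shatters T X := by
  obtain ⟨X, b, hX, rfl⟩ := h
  exact ⟨X, hX, fun g => ⟨X.piecewise g b, fun i hi => by simp [hi], fun i hi => by simp [hi]⟩⟩

theorem Shatters.exists_pcMinor_isSubcube {S : Set (U → Bool)} {X : Finset U}
    (h : Shatters S X) : ∃ T, PCMinor S T ∧ IsSubcube T X.card := by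
  refine ⟨_, pcMinor_image_piecewise_false Xᶜ S, X, fun _ => false, rfl, ?_⟩
  ext f
  constructor
  · rintro ⟨a, _, rfl⟩ i hi
    simp [hi]
  · intro hf
    obtain ⟨a, ha, haf⟩ := h f
    refine ⟨a, ha, funext fun i => ?_⟩
    by_cases hi : i ∈ X
    · simp [hi, haf i hi]
    · simp [hi, hf i hi]

end Shatters

theorem stmt6_general [Fintype U] [DecidableEq U] (S : Set (U → Bool))
    (d : ℕ) :
    ((∀ X : Finset U, Shatters S X → X.card ≤ d) ↔
      ¬ ∃ T : Set (U → Bool), PCMinor S T ∧ IsSubcube T (d + 1)) ∧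
    (∀ (i : U) (d' : ℕ), (∀ X : Finset U, Shatters S X → X.card ≤ d') →
      ∀ X : Finset U, Shatters ((fun f => Function.update f i false) '' S) X → X.card ≤ d') := by
  refine ⟨⟨?_, ?_⟩, fun i d' hvc X hX => hvc X hX.of_image_update_false⟩
  · rintro hvc ⟨T, hST, hT⟩
    obtain ⟨X, hX, hTX⟩ := hT.exists_shatters
    have := hvc X (hST.shatters hTX)
    omega
  · intro hno X hX
    by_contra! hcard
    obtain ⟨Y, hYX, hY⟩ := Finset.exists_subset_card_eq (show d + 1 ≤ X.card by omega)
    exact hno (hY ▸ (hX.mono_right hYX).exists_pcMinor_isSubcube)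

/-- A partial cube has VC-dimension at most `d` if and only if it has no
pc-minor isomorphic to `Q_{d+1}`; in particular, contracting a Θ-class never increases the
VC-dimension. -/
theorem stmt6 [Fintype U] [DecidableEq U] (S : Set (U → Bool)) (hpc : IsPartialCube S)
    (d : ℕ) :
    ((∀ X : Finset U, Shatters S X → X.card ≤ d) ↔
      ¬ ∃ T : Set (U → Bool), PCMinor S T ∧ IsSubcube T (d + 1)) ∧
    (∀ (i : U) (d' : ℕ), (∀ X : Finset U, Shatters S X → X.card ≤ d') →
      ∀ X : Finset U, Shatters ((fun f => Function.update f i false) '' S) X → X.card ≤ d') :=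
  stmt6_general S d
end

section
/- If G is a proper convex subgraph of an antipodal partial cube H of VC-dimension at most d, then G has VC-dimension at most d − 1. -/
open Finset
open scoped Classical

variable {U : Type*}

/-- A partial cube is antipodal if every vertex `v` has an antipode `w` such that the whole
graph is the interval `I(v,w)`. -/
def IsAntipodal [Fintype U] [DecidableEq U] (A : Set (U → Bool)) : Prop :=
  ∀ v ∈ A, ∃ w ∈ A, ∀ x ∈ A, dIn A v x + dIn A x w = dIn A v w

/-!
A proper nonempty convex subgraph `C` of the connected graph `H` has an edge `c h` leaving it,
along some coordinate `e`. By convexity `C` is constant on `e`, so `e` lies outside every set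
`X` shattered by `C`. Then `H` shatters `X ∪ {e}`: patterns agreeing with `C` at `e` are
realized in `C`, and the remaining ones by antipodes of members of `C`, since an antipode `w`
of `a` differs from `a` on every coordinate that is not constant on `H`. Hence `|X| + 1 ≤ d`.
-/

lemma hDist_eq_sum [Fintype U] [DecidableEq U] (x y : U → Bool) :
    hDist x y = ∑ i, if x i ≠ y i then 1 else 0 :=
  Finset.card_filter _ _

lemma hDist_add_hDist_eq_iff [Fintype U] [DecidableEq U] (a x b : U → Bool) :
    hDist a x + hDist x b = hDist a b ↔ ∀ i, a i = b i → x i = a i := by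
  have hcoord : ∀ i, ((if a i ≠ b i then 1 else 0) ≤
      (if a i ≠ x i then 1 else 0) + (if x i ≠ b i then 1 else 0)) ∧
      ((if a i ≠ b i then 1 else 0) =
        (if a i ≠ x i then 1 else 0) + (if x i ≠ b i then 1 else 0) ↔
        (a i = b i → x i = a i)) := by
    intro i
    cases a i <;> cases x i <;> cases b i <;> decide
  rw [hDist_eq_sum, hDist_eq_sum, hDist_eq_sum, ← Finset.sum_add_distrib, eq_comm,
    Finset.sum_eq_sum_iff_of_le fun i _ => (hcoord i).1]
  simp only [Finset.mem_univ, true_implies, hcoord]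

lemma exists_eq_of_hDist_eq_one [Fintype U] [DecidableEq U] {x y : U → Bool}
    (h : hDist x y = 1) : ∃ e, x e ≠ y e ∧ ∀ i ≠ e, x i = y i := by
  obtain ⟨e, he⟩ := Finset.card_eq_one.mp h
  refine ⟨e, by simpa using he.ge (Finset.mem_singleton_self e), fun i hi => ?_⟩
  by_contra hxy
  exact hi (Finset.mem_singleton.mp (he ▸ Finset.mem_filter.mpr ⟨Finset.mem_univ i, hxy⟩))

lemma SimpleGraph.Connected.exists_adj_mem_notMem_of_induce {V : Type*} {G : SimpleGraph V}
    {H C : Set V}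
    (hH : (G.induce H).Connected) (hCH : C ⊆ H) (hne : C.Nonempty) (hproper : C ≠ H) :
    ∃ c ∈ C, ∃ h ∈ H, h ∉ C ∧ G.Adj c h := by
  obtain ⟨c, hc⟩ := hne
  obtain ⟨h, hhH, hhC⟩ := Set.exists_of_ssubset (hCH.ssubset_of_ne hproper)
  obtain ⟨p⟩ := hH.preconnected ⟨c, hCH hc⟩ ⟨h, hhH⟩
  obtain ⟨d, -, hd₁, hd₂⟩ := p.exists_boundary_dart {v | v.1 ∈ C} hc hhC
  exact ⟨d.fst, hd₁, d.snd, d.snd.2, hd₂, d.adj⟩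

section PartialCube

variable [Fintype U] [DecidableEq U] {H : Set (U → Bool)}

lemma IsPartialCube.dIn_add_dIn_eq_iff (hH : IsPartialCube H) {a x b : U → Bool}
    (ha : a ∈ H) (hx : x ∈ H) (hb : b ∈ H) :
    dIn H a x + dIn H x b = dIn H a b ↔ ∀ i, a i = b i → x i = a i := by
  rw [hH.2 a ha x hx, hH.2 x hx b hb, hH.2 a ha b hb, hDist_add_hDist_eq_iff]

lemma IsAntipodal.exists_antipode (hH : IsPartialCube H) (hant : IsAntipodal H)
    {a : U → Bool} (ha : a ∈ H) :
    ∃ w ∈ H, ∀ x ∈ H, ∀ i, x i ≠ a i → w i ≠ a i := by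
  obtain ⟨w, hw, hbetween⟩ := hant a ha
  refine ⟨w, hw, fun x hx i hxi hwi => hxi ?_⟩
  exact (hH.dIn_add_dIn_eq_iff ha hx hw).mp (hbetween x hx) i hwi.symm

/-- Otherwise `h` would lie on a geodesic from `c` to `x`. -/
lemma IsPartialCube.apply_eq_of_convex (hH : IsPartialCube H) {C : Set (U → Bool)}
    (hCH : C ⊆ H)
    (hconv : ∀ x ∈ C, ∀ y ∈ C, ∀ z ∈ H, dIn H x z + dIn H z y = dIn H x y → z ∈ C)
    {c h : U → Bool} (hc : c ∈ C) (hhH : h ∈ H) (hhC : h ∉ C) {e : U}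
    (hch : ∀ i ≠ e, c i = h i) {x : U → Bool} (hx : x ∈ C) : x e = c e := by
  by_contra hxe
  refine hhC (hconv c hc x hx h hhH ((hH.dIn_add_dIn_eq_iff (hCH hc) hhH (hCH hx)).mpr ?_))
  intro i hcx
  obtain rfl | hie := eq_or_ne i e
  · exact absurd hcx.symm hxe
  · exact (hch i hie).symm

end PartialCube

section Shattering

variable [Fintype U] [DecidableEq U] {A B : Set (U → Bool)} {X : Finset U} {e : U} {b : Bool}

lemma Shatters.exists_ne (hB : Shatters B X) {i : U} (hi : i ∈ X) (v : Bool) :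
    ∃ x ∈ B, x i ≠ v := by
  obtain ⟨x, hx, hxg⟩ := hB fun _ => !v
  exact ⟨x, hx, by simp [hxg i hi]⟩

lemma Shatters.notMem_of_forall_eq (hB : Shatters B X) (hconst : ∀ x ∈ B, x e = b) :
    e ∉ X := fun he => by
  obtain ⟨x, hx, hxe⟩ := hB.exists_ne he b
  exact hxe (hconst x hx)

/-- Patterns with value `b` at `e` are realized in `B`; the others by the antipode of a member
of `B` carrying the complementary pattern. -/
lemma Shatters.insert_of_antipodal
    (hanti : ∀ a ∈ A, ∃ w ∈ A, ∀ x ∈ A, ∀ i, x i ≠ a i → w i ≠ a i)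
    (hBA : B ⊆ A) (hB : Shatters B X) (hconst : ∀ x ∈ B, x e = b) {y : U → Bool}
    (hy : y ∈ A) (hye : y e ≠ b) : Shatters A (insert e X) := by
  intro g
  by_cases hge : g e = b
  · obtain ⟨a, ha, hag⟩ := hB g
    refine ⟨a, hBA ha, fun i hi => ?_⟩
    obtain rfl | hi := Finset.mem_insert.mp hi
    · rw [hconst a ha, hge]
    · exact hag i hi
  · obtain ⟨a, ha, hag⟩ := hB fun i => !g i
    obtain ⟨w, hw, hwa⟩ := hanti a (hBA ha)
    refine ⟨w, hw, fun i hi => ?_⟩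
    obtain rfl | hi := Finset.mem_insert.mp hi
    · rw [Bool.eq_not_iff.mpr hge, ← hconst a ha]
      exact Bool.eq_not_iff.mpr (hwa y hy i (hconst a ha ▸ hye))
    · obtain ⟨x, hx, hxa⟩ := hB.exists_ne hi (a i)
      rw [Bool.eq_not_iff.mpr (hwa x (hBA hx) i hxa), hag i hi, Bool.not_not]

end Shattering

/-- A proper convex subgraph of an antipodal partial cube of VC-dimension
at most `d` has VC-dimension at most `d - 1`. -/
theorem stmt8 [Fintype U] [DecidableEq U] (H C : Set (U → Bool)) (d : ℕ)
    (hH : IsPartialCube H) (hant : IsAntipodal H)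
    (hvc : ∀ X : Finset U, Shatters H X → X.card ≤ d)
    (hCH : C ⊆ H) (hne : C.Nonempty) (hproper : C ≠ H)
    (hconv : ∀ x ∈ C, ∀ y ∈ C, ∀ z ∈ H, dIn H x z + dIn H z y = dIn H x y → z ∈ C) :
    ∀ X : Finset U, Shatters C X → (X.card : ℤ) ≤ (d : ℤ) - 1 := by
  intro X hX
  obtain ⟨c, hc, h, hhH, hhC, hch⟩ := hH.1.exists_adj_mem_notMem_of_induce hCH hne hproper
  obtain ⟨e, hche, hch⟩ := exists_eq_of_hDist_eq_one hch
  have hconst : ∀ x ∈ C, x e = c e := fun x hx =>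
    hH.apply_eq_of_convex hCH hconv hc hhH hhC hch hx
  have hshatters : Shatters H (insert e X) :=
    hX.insert_of_antipodal (fun a ha => hant.exists_antipode hH ha) hCH hconst hhH hche.symm
  have hcard := hvc _ hshatters
  rw [Finset.card_insert_of_notMem (hX.notMem_of_forall_eq hconst)] at hcard
  omega
end

section
/- In an oriented matroid (U, L), the tope graph is an antipodal partial cube: it is an isometric subgraph of the hypercube {±1}^U in which every tope T has its negation −T also a tope, and −T is the antipode of T. -/
open Finset
open scoped Classical

variable {U : Type*}

/-- Composition of sign vectors: `(X ∘ Y) e = X e` if `X e ≠ 0`, else `Y e`. -/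
def comp (X Y : U → SignType) : U → SignType := fun e => if X e = 0 then Y e else X e

/-- The support of a sign vector. -/
def supp (X : U → SignType) : Set U := {e | X e ≠ 0}

/-- The separator of two sign vectors. -/
def sep [Fintype U] [DecidableEq U] (X Y : U → SignType) : Finset U :=
  Finset.univ.filter fun e => X e * Y e = -1

/-- A complex of oriented matroids: face symmetry and strong elimination. -/
structure IsCOM (L : Set (U → SignType)) : Prop where
  fs : ∀ X ∈ L, ∀ Y ∈ L, comp X (-Y) ∈ L
  se : ∀ X ∈ L, ∀ Y ∈ L, ∀ e : U, X e * Y e = -1 →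
      ∃ Z ∈ L, Z e = 0 ∧ ∀ f : U, X f * Y f ≠ -1 → Z f = comp X Y f

/-- An oriented matroid: composition, strong elimination and symmetry. -/
structure IsOM (L : Set (U → SignType)) : Prop where
  c : ∀ X ∈ L, ∀ Y ∈ L, comp X Y ∈ L
  se : ∀ X ∈ L, ∀ Y ∈ L, ∀ e : U, X e * Y e = -1 →
      ∃ Z ∈ L, Z e = 0 ∧ ∀ f : U, X f * Y f ≠ -1 → Z f = comp X Y f
  sym : ∀ X ∈ L, -X ∈ L

/-- A simple system of sign vectors. -/
def SimpleSV (L : Set (U → SignType)) : Prop :=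
  (∀ e : U, ∀ s : SignType, ∃ X ∈ L, X e = s) ∧
  ∀ e f : U, e ≠ f → (∃ X ∈ L, X e * X f = 1) ∧ (∃ Y ∈ L, Y e * Y f = -1)

/-- The topes of a system of sign vectors: the covectors with full support. -/
def Topes (L : Set (U → SignType)) : Set (U → SignType) := {X ∈ L | ∀ e, X e ≠ 0}

/-- Conversion of a (full support) sign vector to a vertex of the hypercube. -/
def tb (X : U → SignType) : U → Bool := fun e => decide (X e = 1)

/-- The vertex set of the tope graph inside the hypercube. -/
def TopeSet (L : Set (U → SignType)) : Set (U → Bool) := tb '' Topes L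

/-- The face of a covector `X`. -/
def face (L : Set (U → SignType)) (X : U → SignType) : Set (U → SignType) :=
  {Z | ∃ Y ∈ L, Z = comp X Y}

/-!
Two topes `T₁, T₂` with separator `S` are joined in the tope graph by a path of length `|S|`,
which is the Hamming distance of their images. When `|S| ≥ 2`, eliminating `T₁` and `T₂` at an
element of `S`, followed if necessary by a second elimination against a covector supplied by
simplicity, gives a covector `Z` that agrees with `T₁` off `S` and on `S` vanishes somewhere but
not everywhere. The topes `Z ∘ T₁` and `Z ∘ T₂` then cut the pair into three pairs whose
separators are the proper parts of `S` where `Z` equals `-T₁`, `0` and `T₁`, and induction applies.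
Antipodality is automatic: `-T` is a tope, and in the hypercube `d(v, x) + d(x, -v) = |U|`.
-/

namespace SignType

theorem decide_eq_one_ne_iff : ∀ {a b : SignType}, a ≠ 0 → b ≠ 0 →
    (decide (a = 1) ≠ decide (b = 1) ↔ a * b = -1) := by
  decide

theorem decide_neg_eq_one : ∀ {a : SignType}, a ≠ 0 → decide (-a = 1) = !decide (a = 1) := by
  decide

theorem eq_of_mul_ne_neg_one : ∀ {a b : SignType}, a ≠ 0 → b ≠ 0 → a * b ≠ -1 → a = b := by
  decide

theorem eq_neg_of_mul_eq_neg_one : ∀ {a b : SignType}, a * b = -1 → b = -a := by decide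

theorem neg_ne_zero : ∀ {a : SignType}, a ≠ 0 → -a ≠ 0 := by decide

theorem mul_neg_self_eq_neg_one : ∀ {a : SignType}, a ≠ 0 → a * -a = -1 := by decide

theorem mul_self_ne_neg_one : ∀ {a : SignType}, a ≠ 0 → a * a ≠ -1 := by decide

theorem mul_ite_eq_neg_one_iff : ∀ {a z : SignType}, a ≠ 0 →
    (a * (if z = 0 then a else z) = -1 ↔ z = -a) := by
  decide

theorem ite_mul_ite_eq_neg_one_iff : ∀ {a z : SignType}, a ≠ 0 →
    ((if z = 0 then a else z) * (if z = 0 then -a else z) = -1 ↔ z = 0) := by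
  decide

theorem ite_mul_neg_eq_neg_one_iff : ∀ {a z : SignType}, a ≠ 0 →
    ((if z = 0 then -a else z) * -a = -1 ↔ z = a) := by
  decide

theorem ne_zero_iff_eq_neg_or_eq : ∀ {a z : SignType}, a ≠ 0 → (z ≠ 0 ↔ z = -a ∨ z = a) := by
  decide

theorem mul_eq_one_or_eq_neg_one : ∀ {a b : SignType}, a ≠ 0 → b ≠ 0 → a * b = 1 ∨ a * b = -1 := by
  decide

theorem eq_and_eq_or_neg_eq_and_neg_eq : ∀ {a b y z : SignType}, a ≠ 0 → b ≠ 0 →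
    y * z = a * b → (y = a ∧ z = b) ∨ (-y = a ∧ -z = b) := by
  decide

end SignType

theorem tb_neg {X : U → SignType} (h : ∀ e, X e ≠ 0) : tb (-X) = fun e => !tb X e :=
  funext fun e => SignType.decide_neg_eq_one (h e)

theorem card_filter_eq_neg_add_card_filter_eq_zero_add_card_filter_eq [DecidableEq U] (S : Finset U)
    {T₁ X : U → SignType} (h₁ : ∀ e, T₁ e ≠ 0) :
    #{f ∈ S | X f = -T₁ f} + #{f ∈ S | X f = 0} + #{f ∈ S | X f = T₁ f} = #S := by
  have hne : {f ∈ S | ¬X f = 0} = {f ∈ S | X f = -T₁ f} ∪ {f ∈ S | X f = T₁ f} := by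
    rw [← filter_or]
    exact filter_congr fun f _ => SignType.ne_zero_iff_eq_neg_or_eq (h₁ f)
  have hdisj : Disjoint {f ∈ S | X f = -T₁ f} {f ∈ S | X f = T₁ f} :=
    disjoint_filter.2 fun f _ hneg hpos => h₁ f (SignType.neg_eq_self_iff.1 (hneg.symm.trans hpos))
  have := card_filter_add_card_filter_not (s := S) (fun f => X f = 0)
  rw [hne, card_union_of_disjoint hdisj] at this
  omega

section SignVectors

variable [Fintype U] [DecidableEq U] {T₁ T₂ X : U → SignType}

theorem mem_sep {f : U} : f ∈ sep T₁ T₂ ↔ T₁ f * T₂ f = -1 := by simp [sep]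

theorem hDist_tb (h₁ : ∀ e, T₁ e ≠ 0) (h₂ : ∀ e, T₂ e ≠ 0) :
    hDist (tb T₁) (tb T₂) = #(sep T₁ T₂) :=
  congrArg card <| filter_congr fun i _ => SignType.decide_eq_one_ne_iff (h₁ i) (h₂ i)

theorem apply_eq_of_notMem_sep (h₁ : ∀ e, T₁ e ≠ 0) (h₂ : ∀ e, T₂ e ≠ 0) {f : U}
    (hf : f ∉ sep T₁ T₂) : T₁ f = T₂ f :=
  SignType.eq_of_mul_ne_neg_one (h₁ f) (h₂ f) (mt mem_sep.2 hf)

theorem sep_comp_left (h₁ : ∀ e, T₁ e ≠ 0) (hX : ∀ f ∉ sep T₁ T₂, X f = T₁ f) :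
    sep T₁ (comp X T₁) = {f ∈ sep T₁ T₂ | X f = -T₁ f} := by
  ext f
  rw [mem_filter, mem_sep, comp]
  by_cases hf : f ∈ sep T₁ T₂
  · simpa only [hf, true_and] using SignType.mul_ite_eq_neg_one_iff (h₁ f)
  · simpa only [hf, false_and, iff_false, hX f hf, if_neg (h₁ f)]
      using SignType.mul_self_ne_neg_one (h₁ f)

theorem sep_comp_comp (h₁ : ∀ e, T₁ e ≠ 0) (hX : ∀ f ∉ sep T₁ T₂, X f = T₁ f) :
    sep (comp X T₁) (comp X T₂) = {f ∈ sep T₁ T₂ | X f = 0} := by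
  ext f
  rw [mem_filter, mem_sep, comp, comp]
  by_cases hf : f ∈ sep T₁ T₂
  · rw [SignType.eq_neg_of_mul_eq_neg_one (mem_sep.1 hf)]
    simpa only [hf, true_and] using SignType.ite_mul_ite_eq_neg_one_iff (h₁ f)
  · simpa only [hf, false_and, iff_false, hX f hf, if_neg (h₁ f)]
      using SignType.mul_self_ne_neg_one (h₁ f)

theorem sep_comp_right (h₁ : ∀ e, T₁ e ≠ 0) (h₂ : ∀ e, T₂ e ≠ 0)
    (hX : ∀ f ∉ sep T₁ T₂, X f = T₁ f) :
    sep (comp X T₂) T₂ = {f ∈ sep T₁ T₂ | X f = T₁ f} := by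
  ext f
  rw [mem_filter, mem_sep, comp]
  by_cases hf : f ∈ sep T₁ T₂
  · rw [SignType.eq_neg_of_mul_eq_neg_one (mem_sep.1 hf)]
    simpa only [hf, true_and] using SignType.ite_mul_neg_eq_neg_one_iff (h₁ f)
  · simpa only [hf, false_and, iff_false, hX f hf, apply_eq_of_notMem_sep h₁ h₂ hf,
      if_neg (h₂ f)] using SignType.mul_self_ne_neg_one (h₂ f)

end SignVectors

section OrientedMatroid

variable {L : Set (U → SignType)}

theorem tb_mem_topeSet {T : U → SignType} (hT : T ∈ Topes L) : tb T ∈ TopeSet L :=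
  Set.mem_image_of_mem tb hT

theorem comp_ne_zero_iff {X Y : U → SignType} {e : U} : comp X Y e ≠ 0 ↔ X e ≠ 0 ∨ Y e ≠ 0 := by
  unfold comp
  split_ifs <;> simp_all

theorem comp_mem_topes (hom : IsOM L) {X T : U → SignType} (hX : X ∈ L) (hT : T ∈ Topes L) :
    comp X T ∈ Topes L :=
  ⟨hom.c X hX T hT.1, fun e => comp_ne_zero_iff.2 (Or.inr (hT.2 e))⟩

theorem neg_mem_topes (hom : IsOM L) {T : U → SignType} (hT : T ∈ Topes L) : -T ∈ Topes L :=
  ⟨hom.sym T hT.1, fun e => SignType.neg_ne_zero (hT.2 e)⟩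

theorem topes_nonempty [Fintype U] (hom : IsOM L) (hne : L.Nonempty) (hsimple : SimpleSV L) :
    (Topes L).Nonempty := by
  suffices h : ∀ s : Finset U, ∃ X ∈ L, ∀ e ∈ s, X e ≠ 0 by
    obtain ⟨X, hX, hX0⟩ := h univ
    exact ⟨X, hX, fun e => hX0 e (mem_univ e)⟩
  intro s
  induction s using Finset.induction_on with
  | empty => exact hne.imp fun X hX => ⟨hX, by simp⟩
  | insert a s _ ih =>
    obtain ⟨X, hX, hX0⟩ := ih
    obtain ⟨Y, hY, hYa⟩ := hsimple.1 a 1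
    refine ⟨comp X Y, hom.c X hX Y hY, ?_⟩
    simp only [mem_insert, forall_eq_or_imp, comp_ne_zero_iff]
    exact ⟨Or.inr (hYa ▸ one_ne_zero), fun e he => Or.inl (hX0 e he)⟩

theorem exists_mem_apply_eq_apply_eq (hom : IsOM L) (hsimple : SimpleSV L) {e f : U}
    (hef : e ≠ f) {a b : SignType} (ha : a ≠ 0) (hb : b ≠ 0) :
    ∃ Y ∈ L, Y e = a ∧ Y f = b := by
  obtain ⟨Y, hY, hYab⟩ : ∃ Y ∈ L, Y e * Y f = a * b := by
    rcases SignType.mul_eq_one_or_eq_neg_one ha hb with h | h <;> rw [h]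
    exacts [(hsimple.2 e f hef).1, (hsimple.2 e f hef).2]
  rcases SignType.eq_and_eq_or_neg_eq_and_neg_eq ha hb hYab with h | h
  exacts [⟨Y, hY, h⟩, ⟨-Y, hom.sym Y hY, h⟩]

theorem exists_elim_tope (hom : IsOM L) {T X : U → SignType} (hT : T ∈ Topes L) (hX : X ∈ L)
    {e : U} (he : T e * X e = -1) :
    ∃ Z ∈ L, Z e = 0 ∧ ∀ f, X f = T f → Z f = T f := by
  obtain ⟨Z, hZ, hZe, hZc⟩ := hom.se T hT.1 X hX e he
  refine ⟨Z, hZ, hZe, fun f hf => ?_⟩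
  rw [hZc f (by rw [hf]; exact SignType.mul_self_ne_neg_one (hT.2 f)), comp, if_neg (hT.2 f)]

theorem exists_splitting_covector [Fintype U] [DecidableEq U] (hom : IsOM L)
    (hsimple : SimpleSV L) {T₁ T₂ : U → SignType} (h₁ : T₁ ∈ Topes L) (h₂ : T₂ ∈ Topes L)
    (hS : 1 < #(sep T₁ T₂)) :
    ∃ Z ∈ L, (∀ f ∉ sep T₁ T₂, Z f = T₁ f) ∧ (∃ e ∈ sep T₁ T₂, Z e = 0) ∧
      ∃ g ∈ sep T₁ T₂, Z g ≠ 0 := by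
  obtain ⟨e, he, f, hf, hef⟩ := one_lt_card.1 hS
  obtain ⟨Z, hZ, hZe, hZT⟩ := exists_elim_tope hom h₁ h₂.1 (mem_sep.1 he)
  have hZoff : ∀ h ∉ sep T₁ T₂, Z h = T₁ h :=
    fun h hh => hZT h (apply_eq_of_notMem_sep h₁.2 h₂.2 hh).symm
  by_cases hZf : Z f ≠ 0
  · exact ⟨Z, hZ, hZoff, ⟨e, he, hZe⟩, f, hf, hZf⟩
  obtain ⟨Y, hY, hYe, hYf⟩ :=
    exists_mem_apply_eq_apply_eq hom hsimple hef (h₁.2 e) (SignType.neg_ne_zero (h₁.2 f))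
  have hVoff : ∀ h ∉ sep T₁ T₂, comp Z Y h = T₁ h := fun h hh => by
    rw [comp, if_neg (by rw [hZoff h hh]; exact h₁.2 h), hZoff h hh]
  have hVe : comp Z Y e = T₁ e := by rw [comp, if_pos hZe, hYe]
  have hVf : T₁ f * comp Z Y f = -1 := by
    rw [comp, if_pos (not_not.1 hZf), hYf, SignType.mul_neg_self_eq_neg_one (h₁.2 f)]
  obtain ⟨W, hW, hWf, hWT⟩ := exists_elim_tope hom h₁ (hom.c Z hZ Y hY) hVf
  exact ⟨W, hW, fun h hh => hWT h (hVoff h hh), ⟨f, hf, hWf⟩, e, he, by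
    rw [hWT e hVe]; exact h₁.2 e⟩

end OrientedMatroid

section TopeGraph

variable [Fintype U] [DecidableEq U]

theorem hDist_le_length_s9 {A : Set (U → Bool)} {u v : A} (w : ((cubeGraph U).induce A).Walk u v) :
    hDist u.1 v.1 ≤ w.length := by
  induction w with
  | nil => exact (hammingDist_self _).le
  | @cons u v w huv _ ih =>
    calc hDist u.1 w.1 ≤ hDist u.1 v.1 + hDist v.1 w.1 := hammingDist_triangle _ _ _
      _ ≤ _ := by rw [SimpleGraph.Walk.length_cons, show hDist u.1 v.1 = 1 from huv]; omega

theorem dist_induce_eq_hDist {A : Set (U → Bool)} {u v : A}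
    (w : ((cubeGraph U).induce A).Walk u v) (hw : w.length = hDist u.1 v.1) :
    ((cubeGraph U).induce A).dist u v = hDist u.1 v.1 :=
  le_antisymm (hw ▸ SimpleGraph.dist_le w) <| by
    obtain ⟨p, hp⟩ := SimpleGraph.Reachable.exists_walk_length_eq_dist ⟨w⟩
    exact hp ▸ hDist_le_length_s9 p

theorem hDist_add_hDist_not (a x : U → Bool) :
    hDist a x + hDist x (fun i => !a i) = Fintype.card U := by
  have h : (univ.filter fun i => x i ≠ !a i) = univ.filter fun i => ¬a i ≠ x i :=
    filter_congr fun i _ => by cases a i <;> cases x i <;> decide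
  rw [hDist, hDist, h, card_filter_add_card_filter_not, card_univ]

theorem hDist_not (a : U → Bool) : hDist a (fun i => !a i) = Fintype.card U := by
  have h := hDist_add_hDist_not a a
  rwa [show hDist a a = 0 from hammingDist_self a, zero_add] at h

variable {L : Set (U → SignType)}

theorem exists_walk_length_eq_card_sep (hom : IsOM L) (hsimple : SimpleSV L)
    {T₁ T₂ : U → SignType} (h₁ : T₁ ∈ Topes L) (h₂ : T₂ ∈ Topes L) :
    ∃ w : ((cubeGraph U).induce (TopeSet L)).Walk ⟨tb T₁, tb_mem_topeSet h₁⟩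
      ⟨tb T₂, tb_mem_topeSet h₂⟩, w.length = #(sep T₁ T₂) := by
  induction hn : #(sep T₁ T₂) using Nat.strong_induction_on generalizing T₁ T₂ with
  | _ n ih =>
  rcases lt_or_ge 1 n with hlt | hle
  · obtain ⟨Z, hZ, hZoff, ⟨e, he, hZe⟩, g, hg, hZg⟩ :=
      exists_splitting_covector hom hsimple h₁ h₂ (hn ▸ hlt)
    have hP := comp_mem_topes hom hZ h₁
    have hQ := comp_mem_topes hom hZ h₂
    have hl := sep_comp_left h₁.2 hZoff
    have hm := sep_comp_comp h₁.2 hZoff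
    have hr := sep_comp_right h₁.2 h₂.2 hZoff
    have hsplit := card_filter_eq_neg_add_card_filter_eq_zero_add_card_filter_eq
      (sep T₁ T₂) (X := Z) h₁.2
    have hproper : ∀ p : U → Prop, [DecidablePred p] → (∃ f ∈ sep T₁ T₂, ¬p f) →
        #{f ∈ sep T₁ T₂ | p f} < n :=
      fun p _ h => hn ▸ card_lt_card (filter_ssubset.2 h)
    obtain ⟨w₁, hw₁⟩ :=
      ih _ (hl ▸ hproper _ ⟨e, he, hZe ▸ (SignType.neg_ne_zero (h₁.2 e)).symm⟩) h₁ hP rfl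
    obtain ⟨w₂, hw₂⟩ := ih _ (hm ▸ hproper _ ⟨g, hg, hZg⟩) hP hQ rfl
    obtain ⟨w₃, hw₃⟩ := ih _ (hr ▸ hproper _ ⟨e, he, hZe ▸ (h₁.2 e).symm⟩) hQ h₂ rfl
    refine ⟨w₁.append (w₂.append w₃), ?_⟩
    simp only [SimpleGraph.Walk.length_append, hw₁, hw₂, hw₃, hl, hm, hr]
    omega
  · interval_cases n
    · obtain rfl : T₁ = T₂ := funext fun f =>
        apply_eq_of_notMem_sep h₁.2 h₂.2 (by simp [card_eq_zero.1 hn])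
      exact ⟨.nil, rfl⟩
    · have hadj : ((cubeGraph U).induce (TopeSet L)).Adj ⟨tb T₁, tb_mem_topeSet h₁⟩
          ⟨tb T₂, tb_mem_topeSet h₂⟩ := (hDist_tb h₁.2 h₂.2).trans hn
      exact ⟨hadj.toWalk, rfl⟩

theorem dIn_tb (hom : IsOM L) (hsimple : SimpleSV L) {T₁ T₂ : U → SignType}
    (h₁ : T₁ ∈ Topes L) (h₂ : T₂ ∈ Topes L) :
    dIn (TopeSet L) (tb T₁) (tb T₂) = hDist (tb T₁) (tb T₂) := by
  rw [dIn, dif_pos ⟨tb_mem_topeSet h₁, tb_mem_topeSet h₂⟩]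
  obtain ⟨w, hw⟩ := exists_walk_length_eq_card_sep hom hsimple h₁ h₂
  exact dist_induce_eq_hDist w (hw.trans (hDist_tb h₁.2 h₂.2).symm)

end TopeGraph

/-- The tope graph of a (simple) oriented matroid is an antipodal partial
cube: it is an isometric subgraph of the hypercube, the negation of every tope is a tope,
and the negation is the antipode. -/
theorem stmt9 [Fintype U] [DecidableEq U] (L : Set (U → SignType))
    (hom : IsOM L) (hne : L.Nonempty) (hsimple : SimpleSV L) :
    IsPartialCube (TopeSet L) ∧
    ∀ T ∈ Topes L, -T ∈ Topes L ∧
      ∀ x ∈ TopeSet L,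
        dIn (TopeSet L) (tb T) x + dIn (TopeSet L) x (tb (-T)) =
          dIn (TopeSet L) (tb T) (tb (-T)) := by
  refine ⟨⟨(SimpleGraph.connected_iff _).2 ⟨?_, ?_⟩, ?_⟩, fun T hT => ⟨neg_mem_topes hom hT, ?_⟩⟩
  · rintro ⟨_, T₁, h₁, rfl⟩ ⟨_, T₂, h₂, rfl⟩
    exact ⟨(exists_walk_length_eq_card_sep hom hsimple h₁ h₂).choose⟩
  · obtain ⟨T, hT⟩ := topes_nonempty hom hne hsimple
    exact ⟨⟨tb T, tb_mem_topeSet hT⟩⟩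
  · rintro _ ⟨T₁, h₁, rfl⟩ _ ⟨T₂, h₂, rfl⟩
    exact dIn_tb hom hsimple h₁ h₂
  · rintro _ ⟨X, hX, rfl⟩
    have hnT := neg_mem_topes hom hT
    rw [dIn_tb hom hsimple hT hX, dIn_tb hom hsimple hX hnT, dIn_tb hom hsimple hT hnT,
      tb_neg hT.2, hDist_add_hDist_not, hDist_not]
end

section
/- Let A and B be two gated subgraphs of a connected graph G. Then the metric projections pr_A(B) (vertices of B realizing d(A,B)) and pr_B(A) induce isomorphic gated subgraphs of G, and the map sending a' ∈ pr_B(A) to its gate in B is an isomorphism onto pr_A(B) with d(a', gate_B(a')) = d(A,B) for all a' ∈ pr_B(A). -/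
open scoped Classical

variable {V : Type*}

/-- `g` is a gate of `x` in `H`. -/
def IsGate (G : SimpleGraph V) (H : Set V) (x g : V) : Prop :=
  g ∈ H ∧ ∀ y ∈ H, G.dist x y = G.dist x g + G.dist g y

/-- `H` is gated in `G`: every vertex has a gate in `H`. -/
def Gated (G : SimpleGraph V) (H : Set V) : Prop := ∀ x : V, ∃ g : V, IsGate G H x g

/-- The distance between two sets of vertices. -/
noncomputable def setDist (G : SimpleGraph V) (A B : Set V) : ℕ :=
  sInf {n | ∃ a ∈ A, ∃ b ∈ B, G.dist a b = n}

/-- The metric projection of `A` onto `B`: the vertices of `B` realizing `d(A,B)`. -/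
def projOnto (G : SimpleGraph V) (A B : Set V) : Set V :=
  {b ∈ B | ∃ a ∈ A, G.dist a b = setDist G A B}

lemma setDist_comm (G : SimpleGraph V) (A B : Set V) : setDist G A B = setDist G B A := by
  unfold setDist
  congr 1
  ext n
  constructor
  · rintro ⟨a, ha, b, hb, rfl⟩; exact ⟨b, hb, a, ha, SimpleGraph.dist_comm⟩
  · rintro ⟨b, hb, a, ha, rfl⟩; exact ⟨a, ha, b, hb, SimpleGraph.dist_comm⟩

lemma setDist_le (G : SimpleGraph V) {A B : Set V} {a b : V} (ha : a ∈ A) (hb : b ∈ B) :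
    setDist G A B ≤ G.dist a b :=
  Nat.sInf_le ⟨a, ha, b, hb, rfl⟩

lemma setDist_exists (G : SimpleGraph V) {A B : Set V} (hA : A.Nonempty) (hB : B.Nonempty) :
    ∃ a ∈ A, ∃ b ∈ B, G.dist a b = setDist G A B := by
  obtain ⟨a, ha⟩ := hA
  obtain ⟨b, hb⟩ := hB
  exact Nat.sInf_mem (⟨G.dist a b, a, ha, b, hb, rfl⟩ :
    Set.Nonempty {n | ∃ a ∈ A, ∃ b ∈ B, G.dist a b = n})

/-- Key lemma: if `a ∈ pr_B(A)` and `g` is a gate of `a` in `B`, then `d(a,g) = d(A,B)`,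
`g ∈ pr_A(B)`, and any gate of `g` in `A` is `a` itself. -/
lemma key_lemma (G : SimpleGraph V) (hc : G.Connected) (A B : Set V) {a g : V}
    (ha : a ∈ projOnto G B A) (hg : IsGate G B a g) :
    G.dist a g = setDist G A B ∧ g ∈ projOnto G A B ∧
      ∀ g', IsGate G A g g' → g' = a := by
  obtain ⟨haA, b, hbB, hba⟩ := ha
  rw [← setDist_comm] at hba
  have h1 : G.dist a b = G.dist a g + G.dist g b := hg.2 b hbB
  have h2 : setDist G A B ≤ G.dist a g := setDist_le G haA hg.1
  have hcm : G.dist a b = G.dist b a := SimpleGraph.dist_comm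
  have hag : G.dist a g = setDist G A B := by omega
  refine ⟨hag, ⟨hg.1, a, haA, hag⟩, ?_⟩
  intro g' hg'
  have h3 : G.dist g a = G.dist g g' + G.dist g' a := hg'.2 a haA
  have h4 : setDist G A B ≤ G.dist g' g := setDist_le G hg'.1 hg.1
  have hcm2 : G.dist g a = G.dist a g := SimpleGraph.dist_comm
  have hcm3 : G.dist g g' = G.dist g' g := SimpleGraph.dist_comm
  have h0 : G.dist g' a = 0 := by omega
  exact hc.dist_eq_zero_iff.mp h0

/-- Mutual gate pairs realize the distance between the sets. -/
lemma mutual_dist (G : SimpleGraph V) (hc : G.Connected) {A B : Set V}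
    (hA : A.Nonempty) (hB : B.Nonempty) {a b : V} (haA : a ∈ A) (hbB : b ∈ B)
    (hab : IsGate G A b a) (hba : IsGate G B a b) : G.dist a b = setDist G A B := by
  obtain ⟨a0, ha0, b0, hb0, h0⟩ := setDist_exists G hA hB
  have e1 : G.dist a b0 = G.dist a b + G.dist b b0 := hba.2 b0 hb0
  have e2 : G.dist b a0 = G.dist b a + G.dist a a0 := hab.2 a0 ha0
  have t1 : G.dist a b0 ≤ G.dist a a0 + G.dist a0 b0 := hc.dist_triangle
  have t2 : G.dist b a0 ≤ G.dist b b0 + G.dist b0 a0 := hc.dist_triangle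
  have hle : setDist G A B ≤ G.dist a b := setDist_le G haA hbB
  have hcm : G.dist b a = G.dist a b := SimpleGraph.dist_comm
  have hcm2 : G.dist b0 a0 = G.dist a0 b0 := SimpleGraph.dist_comm
  omega

/-- If `a` is a gate of `b ∈ B` in `A` and `b'` is a gate of `a` in `B`, then `a` is also a
gate of `b'` in `A`, `d(a,b') = d(A,B)` and `b' ∈ pr_A(B)`. -/
lemma mutual_lemma (G : SimpleGraph V) (hc : G.Connected) {A B : Set V}
    (hA : A.Nonempty) (hB : B.Nonempty) (hgA : Gated G A) {b a b' : V} (hb : b ∈ B)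
    (hga : IsGate G A b a) (hgb : IsGate G B a b') :
    IsGate G A b' a ∧ G.dist a b' = setDist G A B ∧ b' ∈ projOnto G A B := by
  obtain ⟨a', ha'⟩ := hgA b'
  have q1 : G.dist a b = G.dist a b' + G.dist b' b := hgb.2 b hb
  have q2 : G.dist b' a = G.dist b' a' + G.dist a' a := ha'.2 a hga.1
  have q3 : G.dist b a' = G.dist b a + G.dist a a' := hga.2 a' ha'.1
  have t : G.dist b a' ≤ G.dist b b' + G.dist b' a' := hc.dist_triangle
  have hcm1 : G.dist b a = G.dist a b := SimpleGraph.dist_comm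
  have hcm2 : G.dist b' a = G.dist a b' := SimpleGraph.dist_comm
  have hcm3 : G.dist a a' = G.dist a' a := SimpleGraph.dist_comm
  have hcm4 : G.dist b b' = G.dist b' b := SimpleGraph.dist_comm
  have h0 : G.dist a a' = 0 := by omega
  have haa' : a = a' := hc.dist_eq_zero_iff.mp h0
  subst haa'
  have hd : G.dist a b' = setDist G A B :=
    mutual_dist G hc hA hB hga.1 hgb.1 ha' hgb
  exact ⟨ha', hd, ⟨hgb.1, a, hga.1, hd⟩⟩

/-- Every vertex of `B` has a gate in `pr_A(B)`. -/
lemma gate_in_proj (G : SimpleGraph V) (hc : G.Connected) {A B : Set V}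
    (hA : A.Nonempty) (hB : B.Nonempty) (hgA : Gated G A) (hgB : Gated G B)
    {b : V} (hb : b ∈ B) : ∃ g, IsGate G (projOnto G A B) b g := by
  obtain ⟨a, ha⟩ := hgA b
  obtain ⟨b', hb'⟩ := hgB a
  obtain ⟨hma, hd, hmem⟩ := mutual_lemma G hc hA hB hgA hb ha hb'
  refine ⟨b', hmem, ?_⟩
  intro y hy
  -- y ∈ pr_A(B); get its gate in A
  obtain ⟨ay, hay⟩ := hgA y
  obtain ⟨hyay, hayBA, huniq⟩ := key_lemma G hc B A hy hay
  rw [← setDist_comm] at hyay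
  -- y is the gate of ay in B
  obtain ⟨w, hw⟩ := hgB ay
  have hwy : w = y := huniq w hw
  rw [hwy] at hw
  have e1 : G.dist ay b = G.dist ay y + G.dist y b := hw.2 b hb
  have e2 : G.dist b ay = G.dist b a + G.dist a ay := ha.2 ay hay.1
  have e3 : G.dist a b = G.dist a b' + G.dist b' b := hb'.2 b hb
  have e4 : G.dist a y = G.dist a b' + G.dist b' y := hb'.2 y hy.1
  have e5 : G.dist y a = G.dist y ay + G.dist ay a := hay.2 a ha.1
  have hcm1 : G.dist ay b = G.dist b ay := SimpleGraph.dist_comm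
  have hcm2 : G.dist ay y = G.dist y ay := SimpleGraph.dist_comm
  have hcm3 : G.dist y b = G.dist b y := SimpleGraph.dist_comm
  have hcm4 : G.dist a b = G.dist b a := SimpleGraph.dist_comm
  have hcm5 : G.dist a y = G.dist y a := SimpleGraph.dist_comm
  have hcm6 : G.dist ay a = G.dist a ay := SimpleGraph.dist_comm
  have hcm7 : G.dist b' b = G.dist b b' := SimpleGraph.dist_comm
  omega

/-- The projection `pr_A(B)` is gated. -/
lemma proj_gated (G : SimpleGraph V) (hc : G.Connected) {A B : Set V}
    (hA : A.Nonempty) (hB : B.Nonempty) (hgA : Gated G A) (hgB : Gated G B) :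
    Gated G (projOnto G A B) := by
  intro x
  obtain ⟨b1, hb1⟩ := hgB x
  obtain ⟨g, hg⟩ := gate_in_proj G hc hA hB hgA hgB hb1.1
  refine ⟨g, hg.1, ?_⟩
  intro y hy
  have h1 : G.dist x y = G.dist x b1 + G.dist b1 y := hb1.2 y hy.1
  have h2 : G.dist x g = G.dist x b1 + G.dist b1 g := hb1.2 g hg.1.1
  have h3 : G.dist b1 y = G.dist b1 g + G.dist g y := hg.2 y hy
  omega

/-- **Dress–Scharlau.** For two gated subgraphs `A`, `B` of a connected graph
`G`, the projections `pr_A(B)` and `pr_B(A)` induce isomorphic gated subgraphs, the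
isomorphism sending each `a ∈ pr_B(A)` to its gate in `B`, which lies at distance `d(A,B)`
from `a`. -/
theorem stmt11 [Fintype V] (G : SimpleGraph V) (hc : G.Connected)
    (A B : Set V) (hA : A.Nonempty) (hB : B.Nonempty)
    (hgA : Gated G A) (hgB : Gated G B) :
    ∃ φ : V → V,
      Set.BijOn φ (projOnto G B A) (projOnto G A B) ∧
      (∀ a ∈ projOnto G B A,
        IsGate G B a (φ a) ∧ φ a ∈ projOnto G A B ∧ G.dist a (φ a) = setDist G A B) ∧
      (∀ a ∈ projOnto G B A, ∀ a' ∈ projOnto G B A, (G.Adj a a' ↔ G.Adj (φ a) (φ a'))) ∧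
      Gated G (projOnto G A B) ∧ Gated G (projOnto G B A) := by
  set gB : V → V := fun x => Classical.choose (hgB x) with hgBdef
  have gB_spec : ∀ x, IsGate G B x (gB x) := fun x => Classical.choose_spec (hgB x)
  set gA : V → V := fun x => Classical.choose (hgA x) with hgAdef
  have gA_spec : ∀ x, IsGate G A x (gA x) := fun x => Classical.choose_spec (hgA x)
  refine ⟨gB, ?_, ?_, ?_, proj_gated G hc hA hB hgA hgB, proj_gated G hc hB hA hgB hgA⟩
  · -- bijectivity
    have mapsφ : Set.MapsTo gB (projOnto G B A) (projOnto G A B) := fun a ha =>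
      (key_lemma G hc A B ha (gB_spec a)).2.1
    have mapsψ : Set.MapsTo gA (projOnto G A B) (projOnto G B A) := fun b hb =>
      (key_lemma G hc B A hb (gA_spec b)).2.1
    have linv : Set.LeftInvOn gA gB (projOnto G B A) := fun a ha =>
      (key_lemma G hc A B ha (gB_spec a)).2.2 (gA (gB a)) (gA_spec (gB a))
    have rinv : Set.RightInvOn gA gB (projOnto G A B) := fun b hb =>
      (key_lemma G hc B A hb (gA_spec b)).2.2 (gB (gA b)) (gB_spec (gA b))
    exact Set.InvOn.bijOn ⟨linv, rinv⟩ mapsφ mapsψ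
  · -- gate/membership/distance properties
    intro a ha
    have k := key_lemma G hc A B ha (gB_spec a)
    exact ⟨gB_spec a, k.2.1, k.1⟩
  · -- adjacency preservation
    intro a ha a' ha'
    have k := key_lemma G hc A B ha (gB_spec a)
    have k' := key_lemma G hc A B ha' (gB_spec a')
    obtain ⟨w, hw⟩ := hgA (gB a')
    have hwa' : w = a' := k'.2.2 w hw
    rw [hwa'] at hw
    have f1 : G.dist a (gB a') = G.dist a (gB a) + G.dist (gB a) (gB a') :=
      (gB_spec a).2 (gB a') (gB_spec a').1
    have f2 : G.dist (gB a') a = G.dist (gB a') a' + G.dist a' a := hw.2 a ha.1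
    have hcm1 : G.dist a (gB a') = G.dist (gB a') a := SimpleGraph.dist_comm
    have hcm2 : G.dist a' a = G.dist a a' := SimpleGraph.dist_comm
    have hcm3 : G.dist (gB a') a' = G.dist a' (gB a') := SimpleGraph.dist_comm
    have hd1 : G.dist a (gB a) = setDist G A B := k.1
    have hd2 : G.dist a' (gB a') = setDist G A B := k'.1
    have hdist : G.dist (gB a) (gB a') = G.dist a a' := by omega
    rw [← SimpleGraph.dist_eq_one_iff_adj, ← SimpleGraph.dist_eq_one_iff_adj, hdist]
end
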